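/- arXiv:2007.06571 — 5 statements merged into one kernel-verified Lean document; each statement's English description precedes it below -/
import Mathlib

section
/- Let a, b, fa, fb, da, db be real numbers with fa ≠ fb, da ≠ 0, db ≠ 0, and set Δ = fb − fa. Then ((1 − 2·fa/Δ)·a − fa/da)·(1 + fa/Δ)² + (fa/Δ)²·((3 + 2·fa/Δ)·b − (Δ/db)·(1 + fa/Δ)) = fb²/(fa−fb)²·(a − fa/da) + fa²/(fa−fb)²·(b − fb/db) − 2·fa·fb/(fa−fb)²·(b − fb·(b−a)/(fb−fa)). -/
/-- The raw inverse-cubic-interpolation formula (equation (3)) equals the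
numerically stable Inverse Cubic Iteration formula (equation (4)). -/
theorem raw_eq_stable_ICI (a b fa fb da db : ℝ)
    (hfab : fa ≠ fb) (hda : da ≠ 0) (hdb : db ≠ 0) :
    ((1 - 2 * fa / (fb - fa)) * a - fa / da) * (1 + fa / (fb - fa))^2
      + (fa / (fb - fa))^2 *
        ((3 + 2 * fa / (fb - fa)) * b - ((fb - fa) / db) * (1 + fa / (fb - fa)))
    = fb^2 / (fa - fb)^2 * (a - fa / da)
      + fa^2 / (fa - fb)^2 * (b - fb / db)
      - 2 * fa * fb / (fa - fb)^2 * (b - fb * (b - a) / (fb - fa)) := by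
  have h : fb - fa ≠ 0 := sub_ne_zero.mpr (Ne.symm hfab)
  have h2 : fa - fb ≠ 0 := sub_ne_zero.mpr hfab
  field_simp
  ring
end

section
/- Let a, b, fa, fb, da, db be real numbers with fa ≠ fb, da ≠ 0, db ≠ 0, and let p be the unique real polynomial of degree at most 3 satisfying p(fa) = a, p'(fa) = 1/da, p(fb) = b, p'(fb) = 1/db. Then p(0) = fb²/(fa−fb)²·(a − fa/da) + fa²/(fa−fb)²·(b − fb/db) − 2·fa·fb/(fa−fb)²·(b − fb·(b−a)/(fb−fa)). -/
/-- The cubic Hermite interpolant of the inverse function, evaluated at 0,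
equals the Inverse Cubic Iteration formula (equation (4)). -/
theorem inverse_interpolant_at_zero_eq_ICI (a b fa fb da db : ℝ)
    (hfab : fa ≠ fb) (hda : da ≠ 0) (hdb : db ≠ 0)
    (p : Polynomial ℝ) (hdeg : p.degree ≤ 3)
    (hpa : p.eval fa = a) (hpa' : p.derivative.eval fa = 1 / da)
    (hpb : p.eval fb = b) (hpb' : p.derivative.eval fb = 1 / db) :
    p.eval 0
    = fb^2 / (fa - fb)^2 * (a - fa / da)
      + fa^2 / (fa - fb)^2 * (b - fb / db)
      - 2 * fa * fb / (fa - fb)^2 * (b - fb * (b - a) / (fb - fa)) := by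
  have hnd : p.natDegree < 4 := by
    have h := Polynomial.natDegree_le_iff_degree_le.mpr hdeg
    norm_cast at h
    omega
  have hnd' : p.derivative.natDegree < 3 := by
    have h := Polynomial.natDegree_derivative_le p
    omega
  have heval : ∀ x : ℝ, p.eval x
      = p.coeff 0 + p.coeff 1 * x + p.coeff 2 * x^2 + p.coeff 3 * x^3 := by
    intro x
    rw [Polynomial.eval_eq_sum_range' hnd]
    simp [Finset.sum_range_succ]
  have heval' : ∀ x : ℝ, p.derivative.eval x
      = p.coeff 1 + 2 * p.coeff 2 * x + 3 * p.coeff 3 * x^2 := by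
    intro x
    rw [Polynomial.eval_eq_sum_range' hnd']
    simp [Finset.sum_range_succ, Polynomial.coeff_derivative]; ring
  have ha : p.coeff 0 + p.coeff 1 * fa + p.coeff 2 * fa^2 + p.coeff 3 * fa^3 = a := by
    rw [← heval]; exact hpa
  have hb : p.coeff 0 + p.coeff 1 * fb + p.coeff 2 * fb^2 + p.coeff 3 * fb^3 = b := by
    rw [← heval]; exact hpb
  have ha' : p.coeff 1 + 2 * p.coeff 2 * fa + 3 * p.coeff 3 * fa^2 = 1 / da := by
    rw [← heval']; exact hpa'
  have hb' : p.coeff 1 + 2 * p.coeff 2 * fb + 3 * p.coeff 3 * fb^2 = 1 / db := by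
    rw [← heval']; exact hpb'
  have h1 : fa / da = fa * (p.coeff 1 + 2 * p.coeff 2 * fa + 3 * p.coeff 3 * fa^2) := by
    rw [ha']; ring
  have h2 : fb / db = fb * (p.coeff 1 + 2 * p.coeff 2 * fb + 3 * p.coeff 3 * fb^2) := by
    rw [hb']; ring
  have hsub : fa - fb ≠ 0 := sub_ne_zero.mpr hfab
  have hsub' : fb - fa ≠ 0 := sub_ne_zero.mpr (Ne.symm hfab)
  rw [heval, h1, h2, ← ha, ← hb]
  field_simp
  ring
end

section
/- Let f : ℝ → ℝ be four times continuously differentiable on a neighbourhood of r, with f(r) = 0 and f'(r) ≠ 0. Then there exist δ > 0 and C > 0 such that for all real u, v with 0 < |u| ≤ δ, 0 < |v| ≤ δ and u ≠ v, one has f(r+u) ≠ f(r+v), f'(r+u) ≠ 0, f'(r+v) ≠ 0, and the ICI iterate Φ computed from the data (r+u, f(r+u), f'(r+u)) and (r+v, f(r+v), f'(r+v)) satisfies |Φ − r| ≤ C·(|u|·|v|)². -/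
/-!
Near `r`, `f` has a `C⁴` local inverse `g` with `g 0 = r`, and the ICI iterate is exactly the
value at `0` of the cubic Hermite interpolant of `g` at the nodes `ya = f a`, `yb = f b` (values
`a`, `b`, slopes `1 / f' a`, `1 / f' b`). The Hermite error formula
`g 0 - p 0 = g⁽⁴⁾ ξ / 24 * ya ^ 2 * yb ^ 2`, obtained by applying Rolle's theorem repeatedly to
`g - p - K (t - ya) ^ 2 (t - yb) ^ 2`, together with `|ya| ≤ L |a - r|` and `|yb| ≤ L |b - r|`,
gives the bound.
-/

/-- The Inverse Cubic Iteration formula Φ(a, ya, da; b, yb, db). -/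
noncomputable def ICI (a ya da b yb db : ℝ) : ℝ :=
  yb^2 / (ya - yb)^2 * (a - ya / da)
    + ya^2 / (ya - yb)^2 * (b - yb / db)
    - 2 * ya * yb / (ya - yb)^2 * (b - yb * (b - a) / (yb - ya))

open Set Filter Topology Polynomial

section Rolle

variable {I : Set ℝ}

theorem exists_disjoint_finset_zeros_of_hasDerivAt (hI : I.OrdConnected) {φ φ' : ℝ → ℝ}
    (hφ : ∀ t ∈ I, HasDerivAt φ (φ' t) t) {S : Finset ℝ} (hSI : ↑S ⊆ I)
    (hS : ∀ s ∈ S, φ s = 0) :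
    ∃ T : Finset ℝ, S.card ≤ T.card + 1 ∧ ↑T ⊆ I ∧ Disjoint S T ∧ ∀ t ∈ T, φ' t = 0 := by
  have hRolle : ∀ p : ℝ × ℝ, ∃ c, p.1 ∈ S → p.2 ∈ S → p.1 < p.2 → c ∈ Ioo p.1 p.2 ∧ φ' c = 0 := by
    rintro ⟨a, b⟩
    by_cases hab : a ∈ S ∧ b ∈ S ∧ a < b
    · obtain ⟨ha, hb, hlt⟩ := hab
      have hsub : Icc a b ⊆ I := hI.out (hSI ha) (hSI hb)
      obtain ⟨c, hc, hc0⟩ := exists_hasDerivAt_eq_zero hlt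
        (fun t ht => (hφ t (hsub ht)).continuousAt.continuousWithinAt)
        ((hS a ha).trans (hS b hb).symm) (fun t ht => hφ t (hsub (Ioo_subset_Icc_self ht)))
      exact ⟨c, fun _ _ _ => ⟨hc, hc0⟩⟩
    · exact ⟨0, fun ha hb hlt => absurd ⟨ha, hb, hlt⟩ hab⟩
  choose c hc using hRolle
  set Z := ({p ∈ S ×ˢ S | p.1 < p.2}).image c
  have hZ : ∀ t ∈ Z, ∃ a ∈ S, ∃ b ∈ S, t ∈ Ioo a b ∧ φ' t = 0 := by
    simp only [Z, Finset.mem_image, Finset.mem_filter, Finset.mem_product]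
    rintro _ ⟨⟨a, b⟩, ⟨⟨ha, hb⟩, hab⟩, rfl⟩
    exact ⟨a, ha, b, hb, hc _ ha hb hab⟩
  refine ⟨Z \ S, Finset.card_le_sdiff_of_interleaved fun a ha b hb hab _ => ?_,
    fun t ht => ?_, Finset.disjoint_sdiff, fun t ht => ?_⟩
  · exact ⟨c (a, b), Finset.mem_image_of_mem _ (by simp [ha, hb, hab]), (hc (a, b) ha hb hab).1⟩
  · obtain ⟨a, ha, b, hb, ht, -⟩ := hZ t (Finset.mem_sdiff.1 ht).1
    exact hI.out (hSI ha) (hSI hb) (Ioo_subset_Icc_self ht)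
  · obtain ⟨-, -, -, -, -, ht⟩ := hZ t (Finset.mem_sdiff.1 ht).1
    exact ht

theorem exists_eq_zero_of_lt_card_zeros (hI : I.OrdConnected) {n : ℕ} {φ : ℕ → ℝ → ℝ}
    (hφ : ∀ k < n, ∀ t ∈ I, HasDerivAt (φ k) (φ (k + 1) t) t) {S : Finset ℝ} (hSI : ↑S ⊆ I)
    (hS : ∀ s ∈ S, φ 0 s = 0) (hn : n < S.card) :
    ∃ ξ ∈ I, φ n ξ = 0 := by
  induction n generalizing φ S with
  | zero =>
    obtain ⟨s, hs⟩ := Finset.card_pos.1 hn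
    exact ⟨s, hSI hs, hS s hs⟩
  | succ n ih =>
    obtain ⟨T, hcard, hTI, -, hT⟩ :=
      exists_disjoint_finset_zeros_of_hasDerivAt hI (hφ 0 n.succ_pos) hSI hS
    exact ih (φ := fun k => φ (k + 1)) (fun k hk => hφ (k + 1) (by omega)) hTI hT (by omega)

theorem exists_eq_zero_of_double_zeros (hI : I.OrdConnected) {φ : ℕ → ℝ → ℝ}
    (hφ : ∀ k < 4, ∀ t ∈ I, HasDerivAt (φ k) (φ (k + 1) t) t) {x y z : ℝ} (hx : x ∈ I)
    (hy : y ∈ I) (hz : z ∈ I) (hxy : x ≠ y) (hxz : x ≠ z) (hyz : y ≠ z)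
    (h0 : ∀ s ∈ ({x, y, z} : Finset ℝ), φ 0 s = 0) (h1 : ∀ s ∈ ({x, y} : Finset ℝ), φ 1 s = 0) :
    ∃ ξ ∈ I, φ 4 ξ = 0 := by
  obtain ⟨T, hcard, hTI, hT, hT0⟩ := exists_disjoint_finset_zeros_of_hasDerivAt hI
    (hφ 0 (by norm_num)) (by simp [insert_subset_iff, *]) h0
  have hcard' : 3 < ({x, y} ∪ T).card := by
    have hxyz : ({x, y, z} : Finset ℝ).card = 3 := by simp [*]
    rw [Finset.card_union_of_disjoint (hT.mono_left (Finset.insert_subset_insert _ (by simp))),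
      Finset.card_pair hxy]
    omega
  exact exists_eq_zero_of_lt_card_zeros hI (n := 3) (φ := fun k => φ (k + 1))
    (fun k hk => hφ (k + 1) (by omega)) (by simp [insert_subset_iff, *])
    (fun s hs => (Finset.mem_union.1 hs).elim (h1 s) (hT0 s)) hcard'

end Rolle

theorem Polynomial.iterate_derivative_natDegree {R : Type*} [Semiring R] (p : R[X]) :
    derivative^[p.natDegree] p = C (p.natDegree.factorial * p.leadingCoeff) := by
  ext m
  rw [coeff_iterate_derivative, coeff_C]
  rcases m with _ | m
  · simp [Nat.descFactorial_self]
  · simp [coeff_eq_zero_of_natDegree_lt (show p.natDegree < m + 1 + p.natDegree by omega)]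

/-- Newton form: `s`, `c`, `d` are the divided differences `g[x,y]`, `g[x,x,y]`, `g[x,x,y,y]`
of a function with values `gx`, `gy` and slopes `dx`, `dy` at `x`, `y`. -/
noncomputable def hermiteCubic (x gx dx y gy dy : ℝ) : ℝ[X] :=
  let s := (gy - gx) / (y - x)
  let c := (s - dx) / (y - x)
  let d := ((dy - s) / (y - x) - c) / (y - x)
  C gx + C dx * (X - C x) + C c * (X - C x) ^ 2 + C d * (X - C x) ^ 2 * (X - C y)

section hermiteCubic

variable {x gx dx y gy dy : ℝ}

theorem hermiteCubic_eval_left : (hermiteCubic x gx dx y gy dy).eval x = gx := by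
  simp [hermiteCubic]

theorem hermiteCubic_derivative_eval_left :
    (derivative (hermiteCubic x gx dx y gy dy)).eval x = dx := by
  simp [hermiteCubic, derivative_sq]

theorem hermiteCubic_eval_right (hxy : x ≠ y) : (hermiteCubic x gx dx y gy dy).eval y = gy := by
  have : y - x ≠ 0 := sub_ne_zero.2 hxy.symm
  simp [hermiteCubic]
  field_simp
  ring

theorem hermiteCubic_derivative_eval_right (hxy : x ≠ y) :
    (derivative (hermiteCubic x gx dx y gy dy)).eval y = dy := by
  have : y - x ≠ 0 := sub_ne_zero.2 hxy.symm
  simp [hermiteCubic, derivative_sq]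
  field_simp
  ring

theorem natDegree_hermiteCubic_le : (hermiteCubic x gx dx y gy dy).natDegree ≤ 3 := by
  dsimp only [hermiteCubic]
  compute_degree

end hermiteCubic

theorem exists_sub_eval_hermiteCubic_eq {I : Set ℝ} (hI : I.OrdConnected) {g : ℝ → ℝ}
    (hg : ∀ k < 4, ∀ t ∈ I, HasDerivAt (iteratedDeriv k g) (iteratedDeriv (k + 1) g t) t)
    {x y z : ℝ} (hx : x ∈ I) (hy : y ∈ I) (hz : z ∈ I) (hxy : x ≠ y) :
    ∃ ξ ∈ I, g z - (hermiteCubic x (g x) (deriv g x) y (g y) (deriv g y)).eval z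
      = iteratedDeriv 4 g ξ / 24 * ((z - x) ^ 2 * (z - y) ^ 2) := by
  rcases eq_or_ne x z with rfl | hxz
  · exact ⟨x, hx, by simp [hermiteCubic_eval_left]⟩
  rcases eq_or_ne y z with rfl | hyz
  · exact ⟨y, hy, by simp [hermiteCubic_eval_right hxy]⟩
  set H := hermiteCubic x (g x) (deriv g x) y (g y) (deriv g y)
  set w : ℝ[X] := (X - C x) ^ 2 * (X - C y) ^ 2
  have hwz : w.eval z = (z - x) ^ 2 * (z - y) ^ 2 := by simp [w]
  have hw4 : derivative^[4] w = C 24 := by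
    have hd : w.natDegree = 4 := by simp only [w]; compute_degree!
    have hm : w.Monic := by simp only [w]; monicity!
    have := iterate_derivative_natDegree w
    rw [hd, hm.leadingCoeff] at this
    rw [this]
    norm_num [Nat.factorial]
  set K := (g z - H.eval z) / w.eval z
  have hKw : K * w.eval z = g z - H.eval z := div_mul_cancel₀ _ (by
    rw [hwz]; exact mul_ne_zero (pow_ne_zero _ (sub_ne_zero.2 hxz.symm))
      (pow_ne_zero _ (sub_ne_zero.2 hyz.symm)))
  set φ : ℕ → ℝ → ℝ := fun k t => iteratedDeriv k g t - (derivative^[k] (H + C K * w)).eval t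
  have hφ : ∀ k < 4, ∀ t ∈ I, HasDerivAt (φ k) (φ (k + 1) t) t := fun k hk t ht => by
    simpa only [φ, Function.iterate_succ_apply'] using
      (hg k hk t ht).fun_sub ((derivative^[k] (H + C K * w)).hasDerivAt t)
  have hφ0 : ∀ s ∈ ({x, y, z} : Finset ℝ), φ 0 s = 0 := by
    simp only [Finset.mem_insert, Finset.mem_singleton]
    rintro s (rfl | rfl | rfl)
    · simp [φ, H, w, hermiteCubic_eval_left]
    · simp [φ, H, w, hermiteCubic_eval_right hxy]
    · simp [φ, hKw]
  have hφ1 : ∀ s ∈ ({x, y} : Finset ℝ), φ 1 s = 0 := by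
    simp only [Finset.mem_insert, Finset.mem_singleton]
    rintro s (rfl | rfl)
    · simp [φ, H, w, hermiteCubic_derivative_eval_left, derivative_sq]
    · simp [φ, H, w, hermiteCubic_derivative_eval_right hxy, derivative_sq]
  obtain ⟨ξ, hξ, hξ0⟩ := exists_eq_zero_of_double_zeros hI hφ hx hy hz hxy hxz hyz hφ0 hφ1
  refine ⟨ξ, hξ, ?_⟩
  have h4 : derivative^[4] (H + C K * w) = C (24 * K) := by
    rw [iterate_map_add, iterate_derivative_C_mul, hw4,
      iterate_derivative_eq_zero (natDegree_hermiteCubic_le.trans_lt (by norm_num))]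
    simp only [zero_add, ← C_mul, mul_comm]
  simp only [φ, h4, eval_C, sub_eq_zero] at hξ0
  rw [hξ0, ← hwz, mul_div_cancel_left₀ _ (by norm_num : (24 : ℝ) ≠ 0), hKw]

theorem ContDiffOn.hasDerivAt_iteratedDeriv {𝕜 F : Type*} [NontriviallyNormedField 𝕜]
    [NormedAddCommGroup F] [NormedSpace 𝕜 F] {f : 𝕜 → F} {s : Set 𝕜} {n : ℕ}
    (hf : ContDiffOn 𝕜 n f s) (hs : IsOpen s) {k : ℕ} (hk : k < n) {x : 𝕜} (hx : x ∈ s) :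
    HasDerivAt (iteratedDeriv k f) (iteratedDeriv (k + 1) f x) x := by
  have hdiff := (hf.differentiableOn_iteratedDerivWithin (mod_cast hk) hs.uniqueDiffOn).congr
    (iteratedDerivWithin_of_isOpen hs).symm
  rw [iteratedDeriv_succ]
  exact (hdiff.differentiableAt (hs.mem_nhds hx)).hasDerivAt

theorem ContDiffAt.exists_abs_sub_eval_hermiteCubic_le {g : ℝ → ℝ} {z : ℝ}
    (hg : ContDiffAt ℝ 4 g z) :
    ∃ η > 0, ∃ M ≥ 0, (∀ x ∈ Metric.closedBall z η, DifferentiableAt ℝ g x) ∧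
      ∀ x ∈ Metric.closedBall z η, ∀ y ∈ Metric.closedBall z η, x ≠ y →
        |g z - (hermiteCubic x (g x) (deriv g x) y (g y) (deriv g y)).eval z|
          ≤ M * (|x - z| * |y - z|) ^ 2 := by
  obtain ⟨V, hV, hgV⟩ := hg.contDiffOn le_rfl (by simp)
  obtain ⟨W, hWV, hW, hzW⟩ := mem_nhds_iff.1 hV
  replace hgV := hgV.mono hWV
  obtain ⟨η, hη, hηW⟩ := Metric.nhds_basis_closedBall.mem_iff.1 (hW.mem_nhds hzW)
  have hI : (Metric.closedBall z η).OrdConnected := by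
    rw [Real.closedBall_eq_Icc]
    exact ordConnected_Icc
  obtain ⟨B, hB⟩ := (isCompact_closedBall z η).exists_bound_of_continuousOn
    (((hgV.continuousOn_iteratedDerivWithin (m := 4) le_rfl hW.uniqueDiffOn).congr
      (iteratedDerivWithin_of_isOpen hW).symm).mono hηW)
  have hB0 : 0 ≤ B := (norm_nonneg _).trans (hB z (Metric.mem_closedBall_self hη.le))
  refine ⟨η, hη, B / 24, by positivity,
    fun x hx => (hgV.differentiableOn (by norm_num)).differentiableAt (hW.mem_nhds (hηW hx)),
    fun x hx y hy hxy => ?_⟩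
  obtain ⟨ξ, hξ, herr⟩ := exists_sub_eval_hermiteCubic_eq hI
    (fun k hk t ht => hgV.hasDerivAt_iteratedDeriv hW hk (hηW ht)) hx hy
    (Metric.mem_closedBall_self hη.le) hxy
  have hw : |(z - x) ^ 2 * (z - y) ^ 2| = (|x - z| * |y - z|) ^ 2 := by
    rw [abs_of_nonneg (by positivity), mul_pow, sq_abs, sq_abs]
    ring
  rw [herr, abs_mul, abs_div, hw, abs_of_pos (by norm_num : (0 : ℝ) < 24)]
  gcongr
  exact hB ξ hξ

theorem ContDiffAt.exists_leftInverse {f : ℝ → ℝ} {r : ℝ} {n : WithTop ℕ∞}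
    (hf : ContDiffAt ℝ n f r) (hn : n ≠ 0) (hd : deriv f r ≠ 0) :
    ∃ g : ℝ → ℝ, ContDiffAt ℝ n g (f r) ∧ ∀ᶠ t in 𝓝 r, g (f t) = t := by
  have hF := (hf.differentiableAt hn).hasDerivAt.hasFDerivAt_equiv hd
  exact ⟨hf.localInverse hF hn, hf.to_localInverse hF hn,
    (hf.hasStrictFDerivAt' hF hn).eventually_left_inverse⟩

theorem deriv_comp_mul_deriv_of_leftInverse {f g : ℝ → ℝ} {a : ℝ}
    (hf : DifferentiableAt ℝ f a) (hg : DifferentiableAt ℝ g (f a))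
    (hgf : ∀ᶠ t in 𝓝 a, g (f t) = t) :
    deriv g (f a) * deriv f a = 1 :=
  ((hg.hasDerivAt.comp a hf.hasDerivAt).congr_of_eventuallyEq
    (hgf.mono fun _ ht => ht.symm)).unique (hasDerivAt_id a)

theorem ICI_eq_eval_hermiteCubic {a ya da b yb db : ℝ} (hy : ya ≠ yb) (hda : da ≠ 0)
    (hdb : db ≠ 0) :
    ICI a ya da b yb db = (hermiteCubic ya a da⁻¹ yb b db⁻¹).eval 0 := by
  have : yb - ya ≠ 0 := sub_ne_zero.2 hy.symm
  have : ya - yb ≠ 0 := sub_ne_zero.2 hy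
  simp only [ICI, hermiteCubic, eval_add, eval_mul, eval_C, eval_sub, eval_X, eval_pow]
  field_simp
  ring

theorem ICI_eq_eval_hermiteCubic_of_leftInverse {f g : ℝ → ℝ} {a b : ℝ} (hab : a ≠ b)
    (hfa : DifferentiableAt ℝ f a) (hfb : DifferentiableAt ℝ f b)
    (hga : DifferentiableAt ℝ g (f a)) (hgb : DifferentiableAt ℝ g (f b))
    (hgfa : ∀ᶠ t in 𝓝 a, g (f t) = t) (hgfb : ∀ᶠ t in 𝓝 b, g (f t) = t) :
    f a ≠ f b ∧ deriv f a ≠ 0 ∧ deriv f b ≠ 0 ∧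
      ICI a (f a) (deriv f a) b (f b) (deriv f b) =
        (hermiteCubic (f a) (g (f a)) (deriv g (f a)) (f b) (g (f b)) (deriv g (f b))).eval 0 := by
  have ha := deriv_comp_mul_deriv_of_leftInverse hfa hga hgfa
  have hb := deriv_comp_mul_deriv_of_leftInverse hfb hgb hgfb
  have hne : f a ≠ f b := fun h => hab (by rw [← hgfa.self_of_nhds, h, hgfb.self_of_nhds])
  refine ⟨hne, right_ne_zero_of_mul_eq_one ha, right_ne_zero_of_mul_eq_one hb, ?_⟩
  rw [ICI_eq_eval_hermiteCubic hne (right_ne_zero_of_mul_eq_one ha)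
    (right_ne_zero_of_mul_eq_one hb), hgfa.self_of_nhds, hgfb.self_of_nhds,
    eq_inv_of_mul_eq_one_left ha, eq_inv_of_mul_eq_one_left hb]

/-- The error of the new ICI iterate is of the order of the square of the
product of the two previous errors (quantitative form of equation (5)). -/
theorem ICI_error_bound (f : ℝ → ℝ) (r : ℝ)
    (hf : ∃ U ∈ nhds r, ContDiffOn ℝ 4 f U)
    (hroot : f r = 0) (hd : deriv f r ≠ 0) :
    ∃ δ > 0, ∃ C > 0, ∀ u v : ℝ,
      0 < |u| → |u| ≤ δ → 0 < |v| → |v| ≤ δ → u ≠ v →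
      f (r + u) ≠ f (r + v) ∧ deriv f (r + u) ≠ 0 ∧ deriv f (r + v) ≠ 0 ∧
      |ICI (r + u) (f (r + u)) (deriv f (r + u))
           (r + v) (f (r + v)) (deriv f (r + v)) - r| ≤ C * (|u| * |v|)^2 := by
  obtain ⟨U, hU, hfU⟩ := hf
  have hfr : ContDiffAt ℝ 4 f r := hfU.contDiffAt hU
  obtain ⟨g, hg, hgf⟩ := hfr.exists_leftInverse (by norm_num) hd
  obtain ⟨η, hη, M, hM, hgd, hgM⟩ := hg.exists_abs_sub_eval_hermiteCubic_le
  obtain ⟨K, s, hs, hK⟩ := (hfr.of_le (by norm_num)).exists_lipschitzOnWith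
  have hev : ∀ᶠ t in 𝓝 r, ((∀ᶠ t' in 𝓝 t, g (f t') = t') ∧ DifferentiableAt ℝ f t) ∧
      t ∈ s ∧ f t ∈ Metric.closedBall (f r) η :=
    (hgf.eventually_nhds.and ((hfr.eventually (by simp)).mono fun _ ht =>
      ht.differentiableAt (by norm_num))).and
      ((eventually_mem_set.2 hs).and
        (hfr.continuousAt.eventually_mem (Metric.closedBall_mem_nhds _ hη)))
  obtain ⟨δ, hδ, hδev⟩ := Metric.nhds_basis_closedBall.eventually_iff.1 hev
  have hnear : ∀ w, |w| ≤ δ → _ := fun w hw => hδev (by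
    rwa [Metric.mem_closedBall, dist_self_add_left, Real.norm_eq_abs])
  have hlip : ∀ w, r + w ∈ s → |f (r + w) - f r| ≤ K * |w| := fun w hw => by
    simpa [Real.dist_eq] using hK.dist_le_mul _ hw r (mem_of_mem_nhds hs)
  refine ⟨δ, hδ, M * K ^ 4 + 1, by positivity, fun u v _ hu _ hv huv => ?_⟩
  obtain ⟨⟨hgfu, hfu⟩, hus, hfuη⟩ := hnear u hu
  obtain ⟨⟨hgfv, hfv⟩, hvs, hfvη⟩ := hnear v hv
  obtain ⟨hne, hdu, hdv, hΦ⟩ := ICI_eq_eval_hermiteCubic_of_leftInverse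
    ((add_right_injective r).ne huv) hfu hfv (hgd _ hfuη) (hgd _ hfvη) hgfu hgfv
  refine ⟨hne, hdu, hdv, ?_⟩
  calc _ = |g (f r) - (hermiteCubic (f (r + u)) (g (f (r + u))) (deriv g (f (r + u)))
        (f (r + v)) (g (f (r + v))) (deriv g (f (r + v)))).eval (f r)| := by
        rw [hΦ, hgf.self_of_nhds, hroot, abs_sub_comm]
    _ ≤ M * (|f (r + u) - f r| * |f (r + v) - f r|) ^ 2 := hgM _ hfuη _ hfvη hne
    _ ≤ M * (K * |u| * (K * |v|)) ^ 2 := by gcongr <;> exact hlip _ ‹_›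
    _ = M * K ^ 4 * (|u| * |v|) ^ 2 := by ring
    _ ≤ (M * K ^ 4 + 1) * (|u| * |v|) ^ 2 := by gcongr; linarith
end

section
/- Let L : ℕ → ℝ satisfy L(n+2) = 2·(L(n+1) + L(n)) for all n, with L(0) < 0 and L(1) < 0. Then L(n) → −∞ as n → ∞, and L(n+1)/L(n) → 1 + √3 as n → ∞. -/
/-!
The characteristic roots of `L (n + 2) = 2 * (L (n + 1) + L n)` are `α = 1 + √3` and
`β = 1 - √3`, with `|β| < α`. By Binet's formula `L n / α ^ n` converges to
`A = (L 1 - β * L 0) / (α - β)`, which is negative when `L 0, L 1 < 0` because `β < 0`.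
Hence `L n ~ A α ^ n`, so `L n → -∞` and `L (n + 1) / L n → α`.
-/

open Filter Topology

section LinearRecurrence

variable {R : Type*} [CommRing R] {α β : R} {u : ℕ → R}

theorem sub_mul_eq_binet (hrec : ∀ n, u (n + 2) = (α + β) * u (n + 1) - α * β * u n) (n : ℕ) :
    (α - β) * u n = (u 1 - β * u 0) * α ^ n - (u 1 - α * u 0) * β ^ n := by
  induction n using Nat.twoStepInduction with
  | zero => ring
  | one => ring
  | more m ih ih_succ =>
    rw [hrec m]
    linear_combination (α + β) * ih_succ - α * β * ih

end LinearRecurrence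

section DominantRoot

variable {α β : ℝ} {u : ℕ → ℝ}

theorem tendsto_div_pow_of_abs_lt (hβα : |β| < α)
    (hrec : ∀ n, u (n + 2) = (α + β) * u (n + 1) - α * β * u n) :
    Tendsto (fun n => u n / α ^ n) atTop (𝓝 ((u 1 - β * u 0) / (α - β))) := by
  have hα : 0 < α := (abs_nonneg β).trans_lt hβα
  have hαβ : α - β ≠ 0 := by linarith [le_abs_self β]
  have hratio : Tendsto (fun n => (β / α) ^ n) atTop (𝓝 0) := by
    refine tendsto_pow_atTop_nhds_zero_of_abs_lt_one ?_
    rwa [abs_div, abs_of_pos hα, div_lt_one hα]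
  have hform : ∀ n, u n / α ^ n = ((u 1 - β * u 0) - (u 1 - α * u 0) * (β / α) ^ n) / (α - β) := by
    intro n
    rw [eq_div_iff hαβ, div_pow, mul_comm, ← mul_div_assoc, sub_mul_eq_binet hrec n]
    field_simp
  simp_rw [hform]
  simpa using ((hratio.const_mul (u 1 - α * u 0)).const_sub (u 1 - β * u 0)).div_const (α - β)

theorem tendsto_atBot_of_tendsto_div_pow {A : ℝ} (hα : 1 < α) (hA : A < 0)
    (hu : Tendsto (fun n => u n / α ^ n) atTop (𝓝 A)) : Tendsto u atTop atBot := by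
  refine ((tendsto_pow_atTop_atTop_of_one_lt hα).atTop_mul_neg hA hu).congr fun n => ?_
  rw [mul_div_cancel₀ _ (pow_ne_zero n (by linarith))]

theorem tendsto_succ_div_of_tendsto_div_pow {A : ℝ} (hα : α ≠ 0) (hA : A ≠ 0)
    (hu : Tendsto (fun n => u n / α ^ n) atTop (𝓝 A)) :
    Tendsto (fun n => u (n + 1) / u n) atTop (𝓝 α) := by
  have hsucc : Tendsto (fun n => u (n + 1) / α ^ (n + 1)) atTop (𝓝 A) :=
    hu.comp (tendsto_add_atTop_nat 1)
  have hlim := (hsucc.const_mul α).div hu hA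
  rw [mul_div_cancel_right₀ _ hA] at hlim
  refine hlim.congr fun n => ?_
  rw [Pi.div_apply, pow_succ', ← div_div, ← mul_div_assoc, mul_div_cancel₀ _ hα,
    div_div_div_cancel_right₀ (pow_ne_zero n hα)]

end DominantRoot

/-- The order of convergence of Inverse Cubic Iteration is 1 + √3: the
log-error recurrence with negative initial data diverges to −∞ and
successive ratios tend to 1 + √3. -/
theorem ICI_log_recurrence_order (L : ℕ → ℝ)
    (hrec : ∀ n, L (n + 2) = 2 * (L (n + 1) + L n))
    (h0 : L 0 < 0) (h1 : L 1 < 0) :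
    Tendsto L atTop atBot ∧
    Tendsto (fun n => L (n + 1) / L n) atTop (𝓝 (1 + Real.sqrt 3)) := by
  set s := Real.sqrt 3
  have hs2 : s ^ 2 = 3 := Real.sq_sqrt (by norm_num)
  have hs1 : 1 < s := by nlinarith [Real.sqrt_nonneg 3]
  have hβα : |1 - s| < 1 + s := by rw [abs_lt]; constructor <;> linarith
  have hrec_roots : ∀ n, L (n + 2) = ((1 + s) + (1 - s)) * L (n + 1) - (1 + s) * (1 - s) * L n := by
    intro n
    rw [hrec n]
    linear_combination -L n * hs2
  have hA : (L 1 - (1 - s) * L 0) / ((1 + s) - (1 - s)) < 0 :=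
    div_neg_of_neg_of_pos (by nlinarith) (by linarith)
  have hlim := tendsto_div_pow_of_abs_lt hβα hrec_roots
  exact ⟨tendsto_atBot_of_tendsto_div_pow (by linarith) hA hlim,
    tendsto_succ_div_of_tendsto_div_pow (by linarith) hA.ne hlim⟩
end

section
/- Let K > 0 and let ε : ℕ → ℝ be a sequence of positive reals satisfying ε(n+2) = K·(ε(n+1)·ε(n))² for all n, and suppose K^(1/3)·ε(0) < 1 and K^(1/3)·ε(1) < 1. Then ε(n) → 0 as n → ∞, and the sequence ε(n)^((1+√3)^(−n)) converges to a limit lying strictly between 0 and 1. -/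
open Filter Topology

/-- Convergence of order 1+√3 in the exact error model: ε(n) → 0 and
ε(n)^((1+√3)^(−n)) converges to a limit strictly between 0 and 1. -/
theorem ICI_error_model_order (K : ℝ) (hK : 0 < K)
    (ε : ℕ → ℝ) (hpos : ∀ n, 0 < ε n)
    (hrec : ∀ n, ε (n + 2) = K * (ε (n + 1) * ε n)^2)
    (h0 : K ^ ((1 : ℝ)/3) * ε 0 < 1) (h1 : K ^ ((1 : ℝ)/3) * ε 1 < 1) :
    Tendsto ε atTop (𝓝 0) ∧
    ∃ c : ℝ, 0 < c ∧ c < 1 ∧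
      Tendsto (fun n => (ε n) ^ (((1 + Real.sqrt 3) ^ n : ℝ)⁻¹))
        atTop (𝓝 c) := by
  have hK3 : (0:ℝ) < K ^ ((1:ℝ)/3) := Real.rpow_pos_of_pos hK _
  have hs2 : Real.sqrt 3 ^ 2 = 3 := Real.sq_sqrt (by norm_num)
  have hsnn : (0:ℝ) ≤ Real.sqrt 3 := Real.sqrt_nonneg 3
  set s := Real.sqrt 3 with hs
  have hs1 : 1 < s := by nlinarith
  have hs2' : s < 2 := by nlinarith
  set φ := 1 + s with hφ
  set ψ := 1 - s with hψ
  have hφ1 : (1:ℝ) < φ := by rw [hφ]; linarith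
  have hφpos : (0:ℝ) < φ := by linarith
  have hψneg : ψ < 0 := by rw [hψ]; linarith
  have hψgt : -1 < ψ := by rw [hψ]; linarith
  have hφsq : φ^2 = 2*φ + 2 := by rw [hφ]; nlinarith
  have hψsq : ψ^2 = 2*ψ + 2 := by rw [hψ]; nlinarith
  set L : ℕ → ℝ := fun n => Real.log (K ^ ((1:ℝ)/3) * ε n) with hLdef
  have hδpos : ∀ n, 0 < K ^ ((1:ℝ)/3) * ε n := fun n => mul_pos hK3 (hpos n)
  -- recurrence for L
  have hLrec : ∀ n, L (n+2) = 2 * L (n+1) + 2 * L n := by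
    intro n
    have h4 : K ^ ((1:ℝ)/3) * K = (K ^ ((1:ℝ)/3))^4 := by
      rw [← Real.rpow_natCast (K ^ ((1:ℝ)/3)) 4, ← Real.rpow_mul hK.le,
        show ((1:ℝ)/3 * ((4:ℕ):ℝ)) = (1:ℝ)/3 + 1 by push_cast; norm_num,
        Real.rpow_add hK, Real.rpow_one]
    have key : K ^ ((1:ℝ)/3) * ε (n+2)
        = (K ^ ((1:ℝ)/3) * ε (n+1))^2 * (K ^ ((1:ℝ)/3) * ε n)^2 := by
      rw [hrec n,
        show K ^ ((1:ℝ)/3) * (K * (ε (n+1) * ε n)^2)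
          = (K ^ ((1:ℝ)/3) * K) * (ε (n+1) * ε n)^2 from by ring, h4]
      ring
    simp only [hLdef, key]
    rw [Real.log_mul (pow_ne_zero 2 (hδpos (n+1)).ne') (pow_ne_zero 2 (hδpos n).ne'),
      Real.log_pow, Real.log_pow]
    push_cast
    ring
  have hL0 : L 0 < 0 := Real.log_neg (hδpos 0) h0
  have hL1 : L 1 < 0 := Real.log_neg (hδpos 1) h1
  -- closed form
  set A : ℝ := (L 1 - ψ * L 0) / (2 * s) with hA
  set B : ℝ := (φ * L 0 - L 1) / (2 * s) with hB
  have hsne : s ≠ 0 := by positivity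
  have base0 : L 0 = A * φ^0 + B * ψ^0 := by
    rw [hA, hB, hφ, hψ]; field_simp; ring
  have base1 : L 1 = A * φ^1 + B * ψ^1 := by
    rw [hA, hB, hφ, hψ]; field_simp; ring
  have hclosed : ∀ n, L n = A * φ^n + B * ψ^n := by
    have key : ∀ n, L n = A * φ^n + B * ψ^n ∧ L (n+1) = A * φ^(n+1) + B * ψ^(n+1) := by
      intro n
      induction n with
      | zero => exact ⟨base0, base1⟩
      | succ n ih =>
        refine ⟨ih.2, ?_⟩
        rw [hLrec n, ih.1, ih.2]
        linear_combination (-(A * φ^n) - B * ψ^n) * hs2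
    exact fun n => (key n).1
  have hAneg : A < 0 := by
    rw [hA]
    apply div_neg_of_neg_of_pos
    · rw [hψ]; nlinarith
    · linarith
  -- L tends to -∞
  have hφtop : Tendsto (fun n : ℕ => φ^n) atTop atTop :=
    tendsto_pow_atTop_atTop_of_one_lt hφ1
  have hAφbot : Tendsto (fun n : ℕ => A * φ^n) atTop atBot :=
    hφtop.const_mul_atTop_of_neg hAneg
  have hψabs : |ψ| < 1 := abs_lt.mpr ⟨hψgt, by linarith⟩
  have hBψbd : ∀ n : ℕ, B * ψ^n ≤ |B| := by
    intro n
    calc B * ψ^n ≤ |B * ψ^n| := le_abs_self _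
    _ = |B| * |ψ|^n := by rw [abs_mul, abs_pow]
    _ ≤ |B| * 1 := by
        gcongr
        exact pow_le_one₀ (abs_nonneg ψ) hψabs.le
    _ = |B| := mul_one _
  have hLbot : Tendsto L atTop atBot := by
    have := tendsto_atBot_add_right_of_ge atTop |B| hAφbot hBψbd
    exact this.congr (fun n => (hclosed n).symm)
  -- part 1
  have hεtend : Tendsto ε atTop (𝓝 0) := by
    have hexp : Tendsto (fun n => K ^ ((1:ℝ)/3) * ε n) atTop (𝓝 0) := by
      have := Real.tendsto_exp_atBot.comp hLbot
      exact this.congr (fun n => Real.exp_log (hδpos n))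
    have := hexp.const_mul (K ^ ((1:ℝ)/3))⁻¹
    rw [mul_zero] at this
    exact this.congr (fun n => inv_mul_cancel_left₀ hK3.ne' (ε n))
  refine ⟨hεtend, Real.exp A, Real.exp_pos A, Real.exp_lt_one_iff.mpr hAneg, ?_⟩
  -- part 2
  set Ck : ℝ := Real.log (K ^ ((1:ℝ)/3)) with hCk
  have hlogε : ∀ n, Real.log (ε n) = L n - Ck := by
    intro n
    simp only [hLdef, Real.log_mul hK3.ne' (hpos n).ne', hCk]
    ring
  have hratio : |ψ/φ| < 1 := by
    rw [abs_div, abs_of_pos hφpos]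
    rw [div_lt_one hφpos]
    calc |ψ| < 1 := hψabs
    _ < φ := hφ1
  have hinv : |φ⁻¹| < 1 := by
    rw [abs_of_pos (inv_pos.mpr hφpos)]
    exact inv_lt_one_of_one_lt₀ hφ1
  have hg : Tendsto (fun n : ℕ => A + B * (ψ/φ)^n - Ck * (φ⁻¹)^n) atTop (𝓝 A) := by
    have t1 : Tendsto (fun n : ℕ => (ψ/φ)^n) atTop (𝓝 0) :=
      tendsto_pow_atTop_nhds_zero_of_abs_lt_one hratio
    have t2 : Tendsto (fun n : ℕ => (φ⁻¹)^n) atTop (𝓝 0) :=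
      tendsto_pow_atTop_nhds_zero_of_abs_lt_one hinv
    have aux : Tendsto (fun n : ℕ => A + B * (ψ/φ)^n - Ck * (φ⁻¹)^n) atTop
        (𝓝 (A + B * 0 - Ck * 0)) :=
      ((tendsto_const_nhds (x := A)).add (t1.const_mul B)).sub (t2.const_mul Ck)
    simpa using aux
  have heq : ∀ n : ℕ, (ε n) ^ ((φ^n : ℝ)⁻¹)
      = Real.exp (A + B * (ψ/φ)^n - Ck * (φ⁻¹)^n) := by
    intro n
    rw [Real.rpow_def_of_pos (hpos n), hlogε n, hclosed n]
    congr 1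
    have hφn : (φ:ℝ)^n ≠ 0 := pow_ne_zero n hφpos.ne'
    rw [div_pow, inv_pow]
    field_simp
  exact ((Real.continuous_exp.tendsto A).comp hg).congr (fun n => (heq n).symm)
end
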